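/- arXiv:1605.00087 — 3 statements merged into one kernel-verified Lean document; each statement's English description precedes it below -/
import Mathlib

section
/- (Comparison principle) Let 0 < q < 1, T > 0, let v, w : [0,T] → ℝ be continuous, and let g : [0,T] × ℝ → ℝ be continuous and nondecreasing in its second variable for each fixed t ∈ [0,T]. Assume (i) v(t) ≤ v(0) + (1/Γ(q)) ∫_0^t (t-s)^(q-1) g(s, v(s)) ds for all t ∈ [0,T], (ii) w(t) ≥ w(0) + (1/Γ(q)) ∫_0^t (t-s)^(q-1) g(s, w(s)) ds for all t ∈ [0,T], and (iii) v(0) < w(0). Then v(t) < w(t) for all t ∈ [0,T]. -/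
open Real Set intervalIntegral

/-!
Let `t₁` be the first time at which `w t₁ ≤ v t₁`; it is positive since `v 0 < w 0`. On `[0, t₁)`
we have `v < w`, so by monotonicity of `g` and positivity of the kernel the fractional integral
`J v` of `g(·, v(·))` up to `t₁` is at most the corresponding `J w`, whence
`v t₁ ≤ v 0 + J v < w 0 + J w ≤ w t₁`.
-/

noncomputable def riemannLiouvilleIntegral (a q : ℝ) (f : ℝ → ℝ) (t : ℝ) : ℝ :=
  (1 / Gamma q) * ∫ s in a..t, (t - s) ^ (q - 1) * f s

theorem exists_first_crossing_of_lt {α β : Type*} [ConditionallyCompleteLinearOrder α]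
    [TopologicalSpace α] [OrderTopology α] [LinearOrder β] [TopologicalSpace β]
    [OrderClosedTopology β] {f g : α → β} {a b : α}
    (hf : ContinuousOn f (Icc a b)) (hg : ContinuousOn g (Icc a b)) (ha : f a < g a)
    (hcross : ∃ t ∈ Icc a b, g t ≤ f t) :
    ∃ t ∈ Ioc a b, g t ≤ f t ∧ ∀ s ∈ Ico a t, f s < g s := by
  set S := {t ∈ Icc a b | g t ≤ f t}
  have hS : IsClosed S := isClosed_Icc.isClosed_le hg hf
  have hbdd : BddBelow S := ⟨a, fun _ hs => hs.1.1⟩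
  obtain ⟨⟨ha₁, hb₁⟩, hgf⟩ : sInf S ∈ S := hS.csInf_mem hcross hbdd
  have hpos : a < sInf S := ha₁.lt_of_ne fun h => (h ▸ hgf).not_gt ha
  refine ⟨sInf S, ⟨hpos, hb₁⟩, hgf, fun s hs => lt_of_not_ge fun hs' => ?_⟩
  exact (csInf_le hbdd ⟨⟨hs.1, hs.2.le.trans hb₁⟩, hs'⟩).not_gt hs.2

theorem intervalIntegrable_sub_rpow_mul {r a b t : ℝ} {f : ℝ → ℝ} (hr : -1 < r)
    (hf : ContinuousOn f (uIcc a b)) :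
    IntervalIntegrable (fun s => (t - s) ^ r * f s) MeasureTheory.volume a b := by
  have hker := (intervalIntegrable_rpow' hr (a := t - a) (b := t - b)).comp_sub_left t
  simp only [sub_sub_cancel] at hker
  exact hker.mul_continuousOn hf

theorem riemannLiouvilleIntegral_mono_on {a q t : ℝ} {f h : ℝ → ℝ} (hq : 0 < q) (hat : a ≤ t)
    (hf : ContinuousOn f (Icc a t)) (hh : ContinuousOn h (Icc a t))
    (hfh : ∀ s ∈ Ioo a t, f s ≤ h s) :
    riemannLiouvilleIntegral a q f t ≤ riemannLiouvilleIntegral a q h t := by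
  have hexp : -1 < q - 1 := by linarith
  rw [← uIcc_of_le hat] at hf hh
  refine mul_le_mul_of_nonneg_left ?_ (one_div_nonneg.2 (Gamma_pos_of_pos hq).le)
  refine integral_mono_on_of_le_Ioo hat (intervalIntegrable_sub_rpow_mul hexp hf)
    (intervalIntegrable_sub_rpow_mul hexp hh) fun s hs => ?_
  exact mul_le_mul_of_nonneg_left (hfh s hs) (rpow_nonneg (sub_nonneg.2 hs.2.le) _)

theorem fractional_comparison_principle_general
    (q T : ℝ) (hq : q ∈ Set.Ioo (0 : ℝ) 1)
    (v w : ℝ → ℝ)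
    (hv : ContinuousOn v (Set.Icc 0 T)) (hw : ContinuousOn w (Set.Icc 0 T))
    (g : ℝ → ℝ → ℝ)
    (hg : ContinuousOn (fun p : ℝ × ℝ => g p.1 p.2) (Set.Icc 0 T ×ˢ (Set.univ : Set ℝ)))
    (hmono : ∀ t ∈ Set.Icc (0 : ℝ) T, ∀ x y : ℝ, x ≤ y → g t x ≤ g t y)
    (hvle : ∀ t ∈ Set.Icc (0 : ℝ) T,
      v t ≤ v 0 + (1 / Real.Gamma q) * ∫ s in (0 : ℝ)..t, (t - s) ^ (q - 1) * g s (v s))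
    (hwge : ∀ t ∈ Set.Icc (0 : ℝ) T,
      w t ≥ w 0 + (1 / Real.Gamma q) * ∫ s in (0 : ℝ)..t, (t - s) ^ (q - 1) * g s (w s))
    (h0 : v 0 < w 0) :
    ∀ t ∈ Set.Icc (0 : ℝ) T, v t < w t := by
  by_contra! hcross
  obtain ⟨t, ht, hwv, hvw⟩ := exists_first_crossing_of_lt hv hw h0 hcross
  have hsub : Icc 0 t ⊆ Icc 0 T := Icc_subset_Icc_right ht.2
  have hcomp : ∀ u : ℝ → ℝ, ContinuousOn u (Icc 0 T) →
      ContinuousOn (fun s => g s (u s)) (Icc 0 t) := fun u hu =>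
    (hg.comp (continuousOn_id.prodMk hu) fun s hs => ⟨hs, trivial⟩).mono hsub
  have hJ : riemannLiouvilleIntegral 0 q (fun s => g s (v s)) t ≤
      riemannLiouvilleIntegral 0 q (fun s => g s (w s)) t :=
    riemannLiouvilleIntegral_mono_on hq.1 ht.1.le (hcomp v hv) (hcomp w hw) fun s hs =>
      hmono s (hsub (Ioo_subset_Icc_self hs)) _ _ (hvw s (Ioo_subset_Ico_self hs)).le
  have ht' : t ∈ Icc 0 T := Ioc_subset_Icc_self ht
  have hvw_t : v t < w t := calc
    v t ≤ v 0 + riemannLiouvilleIntegral 0 q (fun s => g s (v s)) t := hvle t ht'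
    _ < w 0 + riemannLiouvilleIntegral 0 q (fun s => g s (w s)) t := add_lt_add_of_lt_of_le h0 hJ
    _ ≤ w t := hwge t ht'
  exact hvw_t.not_ge hwv

/-- Comparison principle for fractional integral inequalities: if `v` is a subsolution and `w`
a supersolution of the fractional Volterra equation with kernel nondecreasing in the state, and
`v(0) < w(0)`, then `v(t) < w(t)` for all `t ∈ [0,T]`. -/
theorem fractional_comparison_principle
    (q T : ℝ) (hq : q ∈ Set.Ioo (0 : ℝ) 1) (hT : 0 < T)
    (v w : ℝ → ℝ)
    (hv : ContinuousOn v (Set.Icc 0 T)) (hw : ContinuousOn w (Set.Icc 0 T))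
    (g : ℝ → ℝ → ℝ)
    (hg : ContinuousOn (fun p : ℝ × ℝ => g p.1 p.2) (Set.Icc 0 T ×ˢ (Set.univ : Set ℝ)))
    (hmono : ∀ t ∈ Set.Icc (0 : ℝ) T, ∀ x y : ℝ, x ≤ y → g t x ≤ g t y)
    (hvle : ∀ t ∈ Set.Icc (0 : ℝ) T,
      v t ≤ v 0 + (1 / Real.Gamma q) * ∫ s in (0 : ℝ)..t, (t - s) ^ (q - 1) * g s (v s))
    (hwge : ∀ t ∈ Set.Icc (0 : ℝ) T,
      w t ≥ w 0 + (1 / Real.Gamma q) * ∫ s in (0 : ℝ)..t, (t - s) ^ (q - 1) * g s (w s))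
    (h0 : v 0 < w 0) :
    ∀ t ∈ Set.Icc (0 : ℝ) T, v t < w t :=
  fractional_comparison_principle_general q T hq v w hv hw g hg hmono hvle hwge h0
end

section
/- (Divergence rate for solutions of 1-dim FDEs) Let α ∈ (0,1), T > 0, let f : [0,T] × ℝ → ℝ be continuous and satisfy the Lipschitz condition: there is a continuous function L : [0,T] → [0,∞) with |f(t,x) - f(t,y)| ≤ L(t)|x - y| for all t ∈ [0,T] and x, y ∈ ℝ. Let x₁, x₂ : [0,T] → ℝ be continuous solutions of the Volterra integral equation xᵢ(t) = xᵢ(0) + (1/Γ(α)) ∫_0^t (t-τ)^(α-1) f(τ, xᵢ(τ)) dτ for all t ∈ [0,T]. Then for every t ∈ [0,T]: |x₂(t) - x₁(t)| ≤ |x₂(0) - x₁(0)| · E_α((max_{0 ≤ τ ≤ t} L(τ)) · t^α). -/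
/-!
Put `u = |x₂ - x₁|`, `A = u 0` and `M = max_{[0,t]} L`. Subtracting the two Volterra equations
and using the Lipschitz bound gives the fractional Gronwall inequality `u ≤ A + M I^α u` on
`[0, t]`, where `I^α` is the Riemann–Liouville integral. By the Beta integral, `M I^α` maps the
Mittag-Leffler term `(M τ^α)^k / Γ(αk + 1)` to the next one, so iterating the inequality `n` times
from a crude bound `u ≤ C` bounds `u` by `A` times the `n`-th partial sum of `E_α(M t^α)` plus `C`
times its `n`-th term. The series converges because `Γ(x + 1)` grows faster than any exponential,
so the remainder vanishes.
-/

open Real Set intervalIntegral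

noncomputable def mittagLeffler (α z : ℝ) : ℝ :=
  ∑' k : ℕ, z ^ k / Real.Gamma (α * k + 1)

open Filter MeasureTheory

/-- The Riemann–Liouville fractional integral `I^α g (t)`. -/
noncomputable def fracIntegral (α : ℝ) (g : ℝ → ℝ) (t : ℝ) : ℝ :=
  1 / Gamma α * ∫ τ in (0 : ℝ)..t, (t - τ) ^ (α - 1) * g τ

noncomputable def mittagLefflerTerm (α z : ℝ) (k : ℕ) : ℝ :=
  z ^ k / Gamma (α * k + 1)

theorem rpow_sub_one_le_exp_mul_Gamma_add_one {c x : ℝ} (hc : 1 ≤ c) (hx : 1 ≤ x) :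
    c ^ (x - 1) ≤ exp c * Gamma (x + 1) := by
  set n := ⌊x⌋₊
  have hn : (1 : ℝ) ≤ n := by exact_mod_cast Nat.le_floor (by simpa using hx)
  have hnx : (n : ℝ) ≤ x := Nat.floor_le (by linarith)
  have hxn : x - 1 ≤ n := by linarith [Nat.lt_floor_add_one x]
  calc c ^ (x - 1) ≤ c ^ (n : ℝ) := rpow_le_rpow_of_exponent_le hc hxn
    _ = c ^ n := rpow_natCast c n
    _ ≤ exp c * n.factorial := by
      have := pow_div_factorial_le_exp c (by linarith) n
      rwa [div_le_iff₀ (by positivity)] at this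
    _ = exp c * Gamma (n + 1) := by rw [Gamma_nat_eq_factorial]
    _ ≤ exp c * Gamma (x + 1) := by
      gcongr
      exact Gamma_strictMonoOn_Ici.monotoneOn (by rw [mem_Ici]; linarith)
        (by rw [mem_Ici]; linarith) (by linarith)

theorem summable_mittagLefflerTerm {α : ℝ} (hα : 0 < α) (z : ℝ) :
    Summable (mittagLefflerTerm α z) := by
  set q := 2 * |z| + 1
  have hq : 0 < q := by positivity
  -- `c ^ α = q > |z|`, so `Γ(αk + 1) ≥ c^(αk - 1) / exp c` beats `|z| ^ k` geometrically.
  set c := q ^ α⁻¹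
  have hc : 1 ≤ c := one_le_rpow (by linarith [abs_nonneg z]) (inv_nonneg.2 hα.le)
  have hcα : c ^ α = q := by rw [← rpow_mul hq.le, inv_mul_cancel₀ hα.ne', rpow_one]
  have hr : |z| / q < 1 := (div_lt_one hq).2 (by linarith [abs_nonneg z])
  refine ((summable_geometric_of_lt_one (by positivity) hr).mul_left (exp c * c))
    |>.of_norm_bounded_eventually_nat ?_
  filter_upwards [eventually_ge_atTop ⌈α⁻¹⌉₊] with k hk
  have hαk : 1 ≤ α * k := by
    have := mul_le_mul_of_nonneg_left (Nat.ceil_le.1 hk) hα.le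
    rwa [mul_inv_cancel₀ hα.ne'] at this
  have hΓ : 0 < Gamma (α * k + 1) := Gamma_pos_of_pos (by linarith)
  have hqk : q ^ k ≤ c * exp c * Gamma (α * k + 1) := by
    have := rpow_sub_one_le_exp_mul_Gamma_add_one hc hαk
    rwa [rpow_sub_one (by positivity), rpow_mul (by positivity), hcα, rpow_natCast,
      div_le_iff₀ (by positivity), mul_comm, ← mul_assoc] at this
  rw [mittagLefflerTerm, norm_div, norm_pow, Real.norm_eq_abs, Real.norm_of_nonneg hΓ.le,
    div_le_iff₀ hΓ, div_pow]
  calc |z| ^ k = |z| ^ k / q ^ k * q ^ k := by field_simp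
    _ ≤ |z| ^ k / q ^ k * (c * exp c * Gamma (α * k + 1)) := by gcongr
    _ = exp c * c * (|z| ^ k / q ^ k) * Gamma (α * k + 1) := by ring

theorem integral_rpow_mul_sub_rpow {a b s : ℝ} (ha : 0 < a) (hb : 0 < b) (hs : 0 < s) :
    ∫ τ in (0 : ℝ)..s, τ ^ (a - 1) * (s - τ) ^ (b - 1) =
      Gamma a * Gamma b / Gamma (a + b) * s ^ (a + b - 1) := by
  have hΓ : Complex.Gamma ((a + b : ℝ) : ℂ) ≠ 0 := by
    rw [Complex.Gamma_ofReal]; exact_mod_cast (Gamma_pos_of_pos (add_pos ha hb)).ne'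
  have hβ := Complex.Gamma_mul_Gamma_eq_betaIntegral (s := a) (t := b) (by simpa) (by simpa)
  apply Complex.ofReal_injective
  rw [← intervalIntegral.integral_ofReal]
  have hcongr : ∫ τ in (0 : ℝ)..s, ((τ ^ (a - 1) * (s - τ) ^ (b - 1) : ℝ) : ℂ) =
      ∫ τ in (0 : ℝ)..s, (τ : ℂ) ^ ((a : ℂ) - 1) * ((s : ℂ) - τ) ^ ((b : ℂ) - 1) := by
    refine integral_congr fun τ hτ => ?_
    rw [uIcc_of_le hs.le] at hτ
    push_cast [Complex.ofReal_cpow hτ.1, Complex.ofReal_cpow (sub_nonneg.2 hτ.2)]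
    rfl
  have hB :
      Complex.betaIntegral a b = Complex.Gamma a * Complex.Gamma b / Complex.Gamma (a + b) := by
    rw [eq_div_iff (by exact_mod_cast hΓ), mul_comm, hβ]
  rw [hcongr, Complex.betaIntegral_scaled _ _ hs, hB]
  push_cast [Complex.ofReal_cpow hs.le, ← Complex.Gamma_ofReal]
  ring

section fracIntegral

variable {α s : ℝ} {g h : ℝ → ℝ}

theorem intervalIntegrable_sub_rpow_mul_s6 (hα : 0 < α) (hs : 0 ≤ s)
    (hg : ContinuousOn g (Icc 0 s)) :
    IntervalIntegrable (fun τ => (s - τ) ^ (α - 1) * g τ) volume 0 s := by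
  have := ((intervalIntegrable_rpow' (a := 0) (b := s) (by linarith : -1 < α - 1)).comp_sub_left
    s).symm
  simp only [sub_zero, sub_self] at this
  exact this.mul_continuousOn (by rwa [uIcc_of_le hs])

theorem fracIntegral_congr (hs : 0 ≤ s) (hgh : EqOn g h (Icc 0 s)) :
    fracIntegral α g s = fracIntegral α h s := by
  unfold fracIntegral
  congr 1
  exact integral_congr fun τ hτ => by rw [uIcc_of_le hs] at hτ; simp only [hgh hτ]

theorem fracIntegral_const_mul (c : ℝ) :
    fracIntegral α (fun τ => c * g τ) s = c * fracIntegral α g s := by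
  simp only [fracIntegral, mul_left_comm _ c, intervalIntegral.integral_const_mul]

theorem fracIntegral_add (hα : 0 < α) (hs : 0 ≤ s) (hg : ContinuousOn g (Icc 0 s))
    (hh : ContinuousOn h (Icc 0 s)) :
    fracIntegral α (fun τ => g τ + h τ) s = fracIntegral α g s + fracIntegral α h s := by
  simp only [fracIntegral, mul_add, integral_add (intervalIntegrable_sub_rpow_mul_s6 hα hs hg)
    (intervalIntegrable_sub_rpow_mul_s6 hα hs hh)]

theorem fracIntegral_sub (hα : 0 < α) (hs : 0 ≤ s) (hg : ContinuousOn g (Icc 0 s))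
    (hh : ContinuousOn h (Icc 0 s)) :
    fracIntegral α (fun τ => g τ - h τ) s = fracIntegral α g s - fracIntegral α h s := by
  simp only [fracIntegral, mul_sub, integral_sub (intervalIntegrable_sub_rpow_mul_s6 hα hs hg)
    (intervalIntegrable_sub_rpow_mul_s6 hα hs hh)]

theorem fracIntegral_finset_sum {ι : Type*} (S : Finset ι) {G : ι → ℝ → ℝ} (hα : 0 < α)
    (hs : 0 ≤ s) (hG : ∀ i ∈ S, ContinuousOn (G i) (Icc 0 s)) :
    fracIntegral α (fun τ => ∑ i ∈ S, G i τ) s = ∑ i ∈ S, fracIntegral α (G i) s := by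
  simp only [fracIntegral, Finset.mul_sum, integral_finsetSum fun i hi =>
    intervalIntegrable_sub_rpow_mul_s6 hα hs (hG i hi)]

theorem fracIntegral_mono (hα : 0 < α) (hs : 0 ≤ s) (hg : ContinuousOn g (Icc 0 s))
    (hh : ContinuousOn h (Icc 0 s)) (hgh : ∀ τ ∈ Icc 0 s, g τ ≤ h τ) :
    fracIntegral α g s ≤ fracIntegral α h s := by
  refine mul_le_mul_of_nonneg_left ?_ (one_div_pos.2 (Gamma_pos_of_pos hα)).le
  refine integral_mono_on hs (intervalIntegrable_sub_rpow_mul_s6 hα hs hg)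
    (intervalIntegrable_sub_rpow_mul_s6 hα hs hh) fun τ hτ => ?_
  exact mul_le_mul_of_nonneg_left (hgh τ hτ) (rpow_nonneg (sub_nonneg.2 hτ.2) _)

theorem abs_fracIntegral_le (hα : 0 < α) (hs : 0 ≤ s) (hh : ContinuousOn h (Icc 0 s))
    (hgh : ∀ τ ∈ Icc 0 s, |g τ| ≤ h τ) :
    |fracIntegral α g s| ≤ fracIntegral α h s := by
  rw [fracIntegral, abs_mul, abs_of_pos (one_div_pos.2 (Gamma_pos_of_pos hα))]
  refine mul_le_mul_of_nonneg_left ?_ (one_div_pos.2 (Gamma_pos_of_pos hα)).le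
  rw [← Real.norm_eq_abs]
  refine norm_integral_le_of_norm_le hs (ae_of_all _ fun τ hτ => ?_)
    (intervalIntegrable_sub_rpow_mul_s6 hα hs hh)
  have hkernel : 0 ≤ (s - τ) ^ (α - 1) := rpow_nonneg (sub_nonneg.2 hτ.2) _
  rw [norm_mul, Real.norm_of_nonneg hkernel, Real.norm_eq_abs]
  exact mul_le_mul_of_nonneg_left (hgh τ (Ioc_subset_Icc_self hτ)) hkernel

theorem fracIntegral_rpow {β : ℝ} (hα : 0 < α) (hβ : -1 < β) (hs : 0 < s) :
    fracIntegral α (fun τ => τ ^ β) s = Gamma (β + 1) / Gamma (α + β + 1) * s ^ (α + β) := by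
  have hbeta := integral_rpow_mul_sub_rpow (by linarith : 0 < β + 1) hα hs
  simp only [add_sub_cancel_right] at hbeta
  rw [fracIntegral]
  simp only [mul_comm ((s - _) ^ (α - 1))]
  rw [hbeta, show β + 1 + α = α + β + 1 by ring, show α + β + 1 - 1 = α + β by ring]
  field_simp [(Gamma_pos_of_pos hα).ne']

end fracIntegral

section Gronwall

variable {α M : ℝ}

theorem continuous_mittagLefflerTerm_mul_rpow (hα : 0 < α) (M : ℝ) (k : ℕ) :
    Continuous fun τ => mittagLefflerTerm α (M * τ ^ α) k :=
  ((continuous_const.mul (continuous_rpow_const hα.le)).pow k).div_const _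

theorem mul_fracIntegral_mittagLefflerTerm {s : ℝ} (hα : 0 < α) (hs : 0 ≤ s) (k : ℕ) :
    M * fracIntegral α (fun τ => mittagLefflerTerm α (M * τ ^ α) k) s =
      mittagLefflerTerm α (M * s ^ α) (k + 1) := by
  rcases hs.eq_or_lt with rfl | hs
  · simp [fracIntegral, mittagLefflerTerm, zero_rpow hα.ne']
  have hpow : ∀ τ, 0 ≤ τ → ∀ n : ℕ, (M * τ ^ α) ^ n = M ^ n * τ ^ (α * n) := fun τ hτ n => by
    rw [mul_pow, rpow_mul hτ, rpow_natCast]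
  have hterm : EqOn (fun τ => mittagLefflerTerm α (M * τ ^ α) k)
      (fun τ => M ^ k / Gamma (α * k + 1) * τ ^ (α * k)) (Icc 0 s) := fun τ hτ => by
    simp only [mittagLefflerTerm, hpow τ hτ.1]
    ring
  rw [fracIntegral_congr hs.le hterm, fracIntegral_const_mul,
    fracIntegral_rpow hα (by linarith [mul_nonneg hα.le k.cast_nonneg]) hs,
    mittagLefflerTerm, hpow s hs.le]
  have hΓ : Gamma (α * k + 1) ≠ 0 := (Gamma_pos_of_pos (by positivity)).ne'
  push_cast
  field_simp
  ring_nf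

noncomputable def mittagLefflerMajorant (α M A C : ℝ) (n : ℕ) (s : ℝ) : ℝ :=
  A * ∑ k ∈ Finset.range n, mittagLefflerTerm α (M * s ^ α) k
    + C * mittagLefflerTerm α (M * s ^ α) n

theorem continuous_mittagLefflerMajorant (hα : 0 < α) (A C : ℝ) (n : ℕ) :
    Continuous (mittagLefflerMajorant α M A C n) :=
  (continuous_const.mul (continuous_finsetSum _ fun k _ =>
    continuous_mittagLefflerTerm_mul_rpow hα M k)).add
      (continuous_const.mul (continuous_mittagLefflerTerm_mul_rpow hα M n))

theorem add_mul_fracIntegral_mittagLefflerMajorant {s : ℝ} (hα : 0 < α) (hs : 0 ≤ s)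
    (A C : ℝ) (n : ℕ) :
    A + M * fracIntegral α (mittagLefflerMajorant α M A C n) s =
      mittagLefflerMajorant α M A C (n + 1) s := by
  have hcont := continuous_mittagLefflerTerm_mul_rpow hα M
  have hsum : Continuous fun τ => A * ∑ k ∈ Finset.range n, mittagLefflerTerm α (M * τ ^ α) k :=
    continuous_const.mul (continuous_finsetSum _ fun k _ => hcont k)
  have hlast : Continuous fun τ => C * mittagLefflerTerm α (M * τ ^ α) n :=
    continuous_const.mul (hcont n)
  unfold mittagLefflerMajorant
  rw [fracIntegral_add hα hs hsum.continuousOn hlast.continuousOn,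
    fracIntegral_const_mul, fracIntegral_const_mul,
    fracIntegral_finset_sum _ hα hs fun k _ => (hcont k).continuousOn,
    mul_add, mul_left_comm, mul_left_comm M C, Finset.mul_sum]
  simp only [mul_fracIntegral_mittagLefflerTerm hα hs]
  rw [Finset.sum_range_succ']
  simp only [mittagLefflerTerm, pow_zero, Nat.cast_zero, mul_zero, zero_add, Gamma_one, div_one]
  ring

theorem le_mittagLefflerMajorant_of_le_add_fracIntegral {t A C : ℝ} {u : ℝ → ℝ}
    (hα : 0 < α) (hM : 0 ≤ M) (hu : ContinuousOn u (Icc 0 t)) (hC : ∀ s ∈ Icc 0 t, u s ≤ C)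
    (h : ∀ s ∈ Icc 0 t, u s ≤ A + M * fracIntegral α u s) (n : ℕ) :
    ∀ s ∈ Icc 0 t, u s ≤ mittagLefflerMajorant α M A C n s := by
  induction n with
  | zero => simpa [mittagLefflerMajorant, mittagLefflerTerm] using hC
  | succ n ih =>
    intro s hs
    have hsub : Icc 0 s ⊆ Icc 0 t := Icc_subset_Icc_right hs.2
    calc u s ≤ A + M * fracIntegral α u s := h s hs
      _ ≤ A + M * fracIntegral α (mittagLefflerMajorant α M A C n) s := by
        gcongr
        exact fracIntegral_mono hα hs.1 (hu.mono hsub)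
          (continuous_mittagLefflerMajorant hα A C n).continuousOn fun τ hτ => ih τ (hsub hτ)
      _ = mittagLefflerMajorant α M A C (n + 1) s :=
        add_mul_fracIntegral_mittagLefflerMajorant hα hs.1 A C n

theorem le_mul_mittagLeffler_of_le_add_fracIntegral {t A : ℝ} {u : ℝ → ℝ} (hα : 0 < α)
    (hM : 0 ≤ M) (ht : 0 ≤ t) (hu : ContinuousOn u (Icc 0 t))
    (h : ∀ s ∈ Icc 0 t, u s ≤ A + M * fracIntegral α u s) :
    u t ≤ A * mittagLeffler α (M * t ^ α) := by
  obtain ⟨C, hC⟩ := isCompact_Icc.exists_bound_of_continuousOn hu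
  have hiter := le_mittagLefflerMajorant_of_le_add_fracIntegral hα hM hu
    (fun s hs => (le_abs_self _).trans (hC s hs)) h
  have hsum := summable_mittagLefflerTerm hα (M * t ^ α)
  have hlim := (hsum.hasSum.tendsto_sum_nat.const_mul A).add
    (hsum.tendsto_atTop_zero.const_mul C)
  simpa using (ge_of_tendsto' hlim fun n => hiter n t ⟨ht, le_rfl⟩ :
    u t ≤ A * mittagLeffler α (M * t ^ α) + C * 0)

end Gronwall

theorem abs_sub_le_add_mul_fracIntegral {α s M : ℝ} {x₁ x₂ g₁ g₂ : ℝ → ℝ} (hα : 0 < α)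
    (hs : 0 ≤ s) (hg₁ : ContinuousOn g₁ (Icc 0 s)) (hg₂ : ContinuousOn g₂ (Icc 0 s))
    (hx : ContinuousOn (fun τ => |x₂ τ - x₁ τ|) (Icc 0 s))
    (hx₁ : x₁ s = x₁ 0 + fracIntegral α g₁ s) (hx₂ : x₂ s = x₂ 0 + fracIntegral α g₂ s)
    (hg : ∀ τ ∈ Icc 0 s, |g₂ τ - g₁ τ| ≤ M * |x₂ τ - x₁ τ|) :
    |x₂ s - x₁ s| ≤ |x₂ 0 - x₁ 0| + M * fracIntegral α (fun τ => |x₂ τ - x₁ τ|) s := by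
  have hdiff : x₂ s - x₁ s = (x₂ 0 - x₁ 0) + fracIntegral α (fun τ => g₂ τ - g₁ τ) s := by
    rw [fracIntegral_sub hα hs hg₂ hg₁, hx₁, hx₂]
    ring
  rw [hdiff, ← fracIntegral_const_mul]
  exact (abs_add_le _ _).trans (add_le_add_right
    (abs_fracIntegral_le (h := fun τ => M * |x₂ τ - x₁ τ|) hα hs (continuousOn_const.mul hx)
      hg) _)

theorem divergence_rate_1dim_general
    (α T : ℝ) (hα : α ∈ Set.Ioo (0 : ℝ) 1)
    (f : ℝ → ℝ → ℝ)
    (hf : ContinuousOn (fun p : ℝ × ℝ => f p.1 p.2) (Set.Icc 0 T ×ˢ (Set.univ : Set ℝ)))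
    (L : ℝ → ℝ) (hL : ContinuousOn L (Set.Icc 0 T))
    (hLip : ∀ t ∈ Set.Icc (0 : ℝ) T, ∀ x y : ℝ, |f t x - f t y| ≤ L t * |x - y|)
    (x₁ x₂ : ℝ → ℝ)
    (hx₁ : ContinuousOn x₁ (Set.Icc 0 T)) (hx₂ : ContinuousOn x₂ (Set.Icc 0 T))
    (hvolt₁ : ∀ t ∈ Set.Icc (0 : ℝ) T,
      x₁ t = x₁ 0 + (1 / Real.Gamma α) * ∫ τ in (0 : ℝ)..t, (t - τ) ^ (α - 1) * f τ (x₁ τ))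
    (hvolt₂ : ∀ t ∈ Set.Icc (0 : ℝ) T,
      x₂ t = x₂ 0 + (1 / Real.Gamma α) * ∫ τ in (0 : ℝ)..t, (t - τ) ^ (α - 1) * f τ (x₂ τ)) :
    ∀ t ∈ Set.Icc (0 : ℝ) T,
      |x₂ t - x₁ t| ≤ |x₂ 0 - x₁ 0| * mittagLeffler α (sSup (L '' Set.Icc 0 t) * t ^ α) := by
  intro t ht
  have hsub : Icc 0 t ⊆ Icc 0 T := Icc_subset_Icc_right ht.2
  have hLM : ∀ τ ∈ Icc 0 t, L τ ≤ sSup (L '' Icc 0 t) := fun τ hτ =>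
    le_csSup (isCompact_Icc.image_of_continuousOn (hL.mono hsub)).bddAbove (mem_image_of_mem L hτ)
  have h0 : (0 : ℝ) ∈ Icc 0 t := ⟨le_rfl, ht.1⟩
  have hL0 : 0 ≤ L 0 := by simpa using (abs_nonneg _).trans (hLip 0 (hsub h0) 1 0)
  have hfx : ∀ x, ContinuousOn x (Icc 0 T) → ContinuousOn (fun τ => f τ (x τ)) (Icc 0 T) :=
    fun x hx => hf.comp (continuousOn_id.prodMk hx) fun τ hτ => ⟨hτ, mem_univ _⟩
  have hu : ContinuousOn (fun s => |x₂ s - x₁ s|) (Icc 0 T) := (hx₂.sub hx₁).abs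
  refine le_mul_mittagLeffler_of_le_add_fracIntegral hα.1 (hL0.trans (hLM 0 h0)) ht.1
    (hu.mono hsub) fun s hs => ?_
  have hst : Icc 0 s ⊆ Icc 0 t := Icc_subset_Icc_right hs.2
  refine abs_sub_le_add_mul_fracIntegral hα.1 hs.1 ((hfx x₁ hx₁).mono (hst.trans hsub))
    ((hfx x₂ hx₂).mono (hst.trans hsub)) (hu.mono (hst.trans hsub)) (hvolt₁ s (hsub hs))
    (hvolt₂ s (hsub hs)) fun τ hτ => ?_
  exact (hLip τ (hsub (hst hτ)) _ _).trans
    (mul_le_mul_of_nonneg_right (hLM τ (hst hτ)) (abs_nonneg _))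

/-- Divergence rate for solutions of one-dimensional Caputo FDEs (in Volterra integral form):
`|x₂(t) - x₁(t)| ≤ |x₂(0) - x₁(0)| E_α((max_{0 ≤ τ ≤ t} L(τ)) t^α)`. -/
theorem divergence_rate_1dim
    (α T : ℝ) (hα : α ∈ Set.Ioo (0 : ℝ) 1) (hT : 0 < T)
    (f : ℝ → ℝ → ℝ)
    (hf : ContinuousOn (fun p : ℝ × ℝ => f p.1 p.2) (Set.Icc 0 T ×ˢ (Set.univ : Set ℝ)))
    (L : ℝ → ℝ) (hL : ContinuousOn L (Set.Icc 0 T))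
    (hLnonneg : ∀ t ∈ Set.Icc (0 : ℝ) T, 0 ≤ L t)
    (hLip : ∀ t ∈ Set.Icc (0 : ℝ) T, ∀ x y : ℝ, |f t x - f t y| ≤ L t * |x - y|)
    (x₁ x₂ : ℝ → ℝ)
    (hx₁ : ContinuousOn x₁ (Set.Icc 0 T)) (hx₂ : ContinuousOn x₂ (Set.Icc 0 T))
    (hvolt₁ : ∀ t ∈ Set.Icc (0 : ℝ) T,
      x₁ t = x₁ 0 + (1 / Real.Gamma α) * ∫ τ in (0 : ℝ)..t, (t - τ) ^ (α - 1) * f τ (x₁ τ))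
    (hvolt₂ : ∀ t ∈ Set.Icc (0 : ℝ) T,
      x₂ t = x₂ 0 + (1 / Real.Gamma α) * ∫ τ in (0 : ℝ)..t, (t - τ) ^ (α - 1) * f τ (x₂ τ)) :
    ∀ t ∈ Set.Icc (0 : ℝ) T,
      |x₂ t - x₁ t| ≤ |x₂ 0 - x₁ 0| * mittagLeffler α (sSup (L '' Set.Icc 0 t) * t ^ α) :=
  divergence_rate_1dim_general α T hα f hf L hL hLip x₁ x₂ hx₁ hx₂ hvolt₁ hvolt₂
end

section
/- (Divergence rate for solutions of d-dimensional FDEs) Let α ∈ (0,1), T > 0, d ≥ 1, let f : [0,T] × ℝ^d → ℝ^d be continuous and satisfy the Lipschitz condition: there is a continuous function L : [0,T] → [0,∞) with ‖f(t,x) - f(t,y)‖ ≤ L(t)‖x - y‖ for all t ∈ [0,T] and x, y ∈ ℝ^d, where ‖·‖ is the Euclidean norm. Let x₁, x₂ : [0,T] → ℝ^d be continuous solutions of the Volterra integral equation xᵢ(t) = xᵢ(0) + (1/Γ(α)) ∫_0^t (t-τ)^(α-1) f(τ, xᵢ(τ)) dτ for all t ∈ [0,T]. Then for every t ∈ [0,T]: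 ‖x₂(t) - x₁(t)‖ ≤ ‖x₂(0) - x₁(0)‖ · E_α((max_{0 ≤ τ ≤ t} L(τ)) · t^α). -/
/-!
The difference `u(s) = ‖x₂(s) - x₁(s)‖` satisfies the weakly singular integral inequality
`u(s) ≤ u(0) + M/Γ(α) ∫₀ˢ (s-τ)^(α-1) u(τ) dτ` with `M = max_{[0,t]} L`. Integrating the series of
`E_α(M s^α)` term by term (each term is a Beta integral) shows that `s ↦ E_α(M s^α)` solves the
corresponding integral equation with `u(0) = 1`. Comparing `u` with `(u(0) + δ) E_α(M s^α)` at the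
first time they could meet gives `u < (u(0) + δ) E_α(M s^α)`, and `δ → 0` gives the bound.
-/

open Real Set intervalIntegral

open MeasureTheory Filter Topology

lemma intervalIntegrable_sub_rpow_sub_one {α : ℝ} (hα : 0 < α) (s : ℝ) :
    IntervalIntegrable (fun τ => (s - τ) ^ (α - 1)) volume 0 s := by
  simpa using
    ((intervalIntegrable_rpow' (a := 0) (b := s) (r := α - 1) (by linarith)).comp_sub_left s).symm

lemma Real.Gamma_add_one_mul_rpow_le {x α : ℝ} (hx : 0 < x) (hα : 0 < α) :
    Gamma (x + 1) * x ^ α ≤ Gamma (x + 1 + α) := by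
  -- `log Γ` is convex and its slope on `[x, x + 1]` is `log x`.
  have hslope := convexOn_log_Gamma.slope_mono_adjacent (y := x + 1) (mem_Ioi.2 hx)
    (mem_Ioi.2 (by linarith : 0 < x + 1 + α)) (by linarith) (by linarith)
  have hΓx := Gamma_pos_of_pos hx
  simp only [Function.comp, Gamma_add_one hx.ne', log_mul hx.ne' hΓx.ne',
    add_sub_cancel_left, add_sub_cancel_right, div_one] at hslope
  rw [le_div_iff₀ hα] at hslope
  rw [Gamma_add_one hx.ne', rpow_def_of_pos hx, ← exp_log (mul_pos hx hΓx),
    ← exp_log (Gamma_pos_of_pos (by linarith : 0 < x + 1 + α)), ← exp_add, exp_le_exp,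
    log_mul hx.ne' hΓx.ne']
  linarith

lemma summable_pow_div_Gamma {α : ℝ} (hα : 0 < α) (z : ℝ) :
    Summable fun k : ℕ => z ^ k / Gamma (α * k + 1) := by
  refine summable_of_ratio_norm_eventually_le (r := 1 / 2) (by norm_num) ?_
  have hgrowth : Tendsto (fun k : ℕ => (α * k) ^ α) atTop atTop :=
    (tendsto_rpow_atTop hα).comp (tendsto_natCast_atTop_atTop.const_mul_atTop hα)
  filter_upwards [hgrowth.eventually_ge_atTop (2 * |z|), eventually_ge_atTop 1] with k hk hk1
  have hαk : 0 < α * k := mul_pos hα (by exact_mod_cast hk1)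
  have hΓ : 0 < Gamma (α * k + 1) := Gamma_pos_of_pos (by linarith)
  have hΓsucc : Gamma (α * k + 1) * (2 * |z|) ≤ Gamma (α * ↑(k + 1) + 1) :=
    calc Gamma (α * k + 1) * (2 * |z|) ≤ Gamma (α * k + 1) * (α * k) ^ α := by gcongr
      _ ≤ Gamma (α * k + 1 + α) := Gamma_add_one_mul_rpow_le hαk hα
      _ = Gamma (α * ↑(k + 1) + 1) := by push_cast; ring_nf
  have hΓ' : 0 < Gamma (α * ↑(k + 1) + 1) := Gamma_pos_of_pos (by positivity)
  rw [norm_div, norm_div, norm_pow, norm_pow, norm_of_nonneg hΓ.le, norm_of_nonneg hΓ'.le,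
    norm_eq_abs, div_le_iff₀ hΓ']
  calc |z| ^ (k + 1) = 1 / 2 * (|z| ^ k / Gamma (α * k + 1)) * (Gamma (α * k + 1) * (2 * |z|)) := by
        field_simp; ring
    _ ≤ 1 / 2 * (|z| ^ k / Gamma (α * k + 1)) * Gamma (α * ↑(k + 1) + 1) := by gcongr

lemma integral_rpow_mul_one_sub_rpow {p q : ℝ} (hp : 0 < p) (hq : 0 < q) :
    ∫ x in (0 : ℝ)..1, x ^ (p - 1) * (1 - x) ^ (q - 1) = Gamma p * Gamma q / Gamma (p + q) := by
  have hB : Complex.betaIntegral p q = ↑(∫ x in (0 : ℝ)..1, x ^ (p - 1) * (1 - x) ^ (q - 1)) := by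
    rw [Complex.betaIntegral, ← intervalIntegral.integral_ofReal]
    refine integral_congr fun x hx => ?_
    rw [uIcc_of_le zero_le_one] at hx
    push_cast
    rw [Complex.ofReal_cpow hx.1, Complex.ofReal_cpow (sub_nonneg.2 hx.2)]
    push_cast
    rfl
  have h := Complex.betaIntegral_eq_Gamma_mul_div p q (by simpa) (by simpa)
  rw [hB, ← Complex.ofReal_add, Complex.Gamma_ofReal, Complex.Gamma_ofReal,
    Complex.Gamma_ofReal] at h
  exact_mod_cast h

lemma integral_sub_rpow_mul_rpow {α q s : ℝ} (hα : 0 < α) (hq : -1 < q) (hs : 0 < s) :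
    ∫ τ in (0 : ℝ)..s, (s - τ) ^ (α - 1) * τ ^ q
      = Gamma α * Gamma (q + 1) / Gamma (α + q + 1) * s ^ (α + q) := by
  have hsubst := smul_integral_comp_mul_left (fun τ => (s - τ) ^ (α - 1) * τ ^ q) s
    (a := 0) (b := 1)
  simp only [mul_zero, mul_one, smul_eq_mul] at hsubst
  have hscale : ∀ x ∈ uIcc (0 : ℝ) 1, (s - s * x) ^ (α - 1) * (s * x) ^ q
      = s ^ (α - 1) * s ^ q * (x ^ (q + 1 - 1) * (1 - x) ^ (α - 1)) := by
    intro x hx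
    rw [uIcc_of_le zero_le_one] at hx
    rw [show s - s * x = s * (1 - x) by ring, mul_rpow hs.le (sub_nonneg.2 hx.2),
      mul_rpow hs.le hx.1, add_sub_cancel_right]
    ring
  rw [← hsubst, integral_congr hscale, intervalIntegral.integral_const_mul,
    integral_rpow_mul_one_sub_rpow (by linarith) hα, ← mul_assoc, ← mul_assoc,
    ← rpow_one_add' hs.le (by linarith), ← rpow_add hs]
  rw [show 1 + (α - 1) + q = α + q by ring, show q + 1 + α = α + q + 1 by ring]
  ring

lemma hasSum_mittagLeffler {α : ℝ} (hα : 0 < α) (z : ℝ) :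
    HasSum (fun k : ℕ => z ^ k / Gamma (α * k + 1)) (mittagLeffler α z) :=
  (summable_pow_div_Gamma hα z).hasSum

lemma mittagLeffler_zero (α : ℝ) : mittagLeffler α 0 = 1 := by
  rw [mittagLeffler, tsum_eq_single 0 fun k hk => by simp [zero_pow hk]]
  simp

lemma continuous_mittagLeffler {α : ℝ} (hα : 0 < α) : Continuous (mittagLeffler α) := by
  refine continuous_iff_continuousAt.2 fun z => ?_
  have hR : ContinuousOn (mittagLeffler α) (Icc (-(|z| + 1)) (|z| + 1)) := by
    refine continuousOn_tsum (fun k => (continuousOn_pow k).div_const _)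
      (summable_pow_div_Gamma hα (|z| + 1)) fun k y hy => ?_
    have hΓ : 0 < Gamma (α * k + 1) := Gamma_pos_of_pos (by positivity)
    rw [norm_div, norm_pow, norm_of_nonneg hΓ.le]
    gcongr
    exact abs_le.2 hy
  exact hR.continuousAt (Icc_mem_nhds (by linarith [neg_abs_le z]) (by linarith [le_abs_self z]))

lemma mul_integral_sub_rpow_mul_pow_div_Gamma {α M s : ℝ} (hα : 0 < α) (hs : 0 < s) (k : ℕ) :
    M * ∫ τ in (0 : ℝ)..s, (s - τ) ^ (α - 1) * ((M * τ ^ α) ^ k / Gamma (α * k + 1))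
      = Gamma α * ((M * s ^ α) ^ (k + 1) / Gamma (α * ↑(k + 1) + 1)) := by
  have hpow : ∀ τ ∈ uIcc 0 s, (s - τ) ^ (α - 1) * ((M * τ ^ α) ^ k / Gamma (α * k + 1))
      = M ^ k / Gamma (α * k + 1) * ((s - τ) ^ (α - 1) * τ ^ (α * k)) := by
    intro τ hτ
    rw [uIcc_of_le hs.le] at hτ
    rw [mul_pow, ← rpow_mul_natCast hτ.1]
    ring
  rw [integral_congr hpow, intervalIntegral.integral_const_mul,
    integral_sub_rpow_mul_rpow hα (by linarith [show 0 ≤ α * k by positivity]) hs,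
    mul_pow, ← rpow_mul_natCast hs.le]
  push_cast
  rw [show α * (k + 1) = α + α * k by ring]
  field_simp
  ring

theorem mittagLeffler_volterra {α M s : ℝ} (hα : 0 < α) (hM : 0 ≤ M) (hs : 0 ≤ s) :
    M * ∫ τ in (0 : ℝ)..s, (s - τ) ^ (α - 1) * mittagLeffler α (M * τ ^ α)
      = Gamma α * (mittagLeffler α (M * s ^ α) - 1) := by
  rcases hs.eq_or_lt with rfl | hs
  · simp [zero_rpow hα.ne', mittagLeffler_zero]
  set F : ℕ → ℝ → ℝ := fun k τ => (s - τ) ^ (α - 1) * ((M * τ ^ α) ^ k / Gamma (α * k + 1))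
  have hF_int : ∀ k, IntervalIntegrable (F k) volume 0 s := fun k =>
    (intervalIntegrable_sub_rpow_sub_one hα s).mul_continuousOn
      (((continuous_const.mul (continuous_rpow_const hα.le)).pow k).div_const _).continuousOn
  have hF_nonneg : ∀ k, ∀ τ ∈ uIoc 0 s, 0 ≤ F k τ := by
    intro k τ hτ
    rw [uIoc_of_le hs.le] at hτ
    have hΓ : 0 < Gamma (α * k + 1) := Gamma_pos_of_pos (by positivity)
    exact mul_nonneg (rpow_nonneg (sub_nonneg.2 hτ.2) _)
      (div_nonneg (pow_nonneg (mul_nonneg hM (rpow_nonneg hτ.1.le _)) _) hΓ.le)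
  have hF_sum : ∀ τ, HasSum (fun k => F k τ) ((s - τ) ^ (α - 1) * mittagLeffler α (M * τ ^ α)) :=
    fun τ => (hasSum_mittagLeffler hα _).mul_left _
  have hsum_int : HasSum (fun k => ∫ τ in (0 : ℝ)..s, F k τ)
      (∫ τ in (0 : ℝ)..s, (s - τ) ^ (α - 1) * mittagLeffler α (M * τ ^ α)) := by
    refine intervalIntegral.hasSum_integral_of_dominated_convergence F
      (fun k => (hF_int k).def'.aestronglyMeasurable)
      (fun k => .of_forall fun τ hτ => (norm_of_nonneg (hF_nonneg k τ hτ)).le)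
      (.of_forall fun τ _ => (hF_sum τ).summable) ?_ (.of_forall fun τ _ => hF_sum τ)
    simp_rw [fun τ => (hF_sum τ).tsum_eq]
    exact (intervalIntegrable_sub_rpow_sub_one hα s).mul_continuousOn
      ((continuous_mittagLeffler hα).comp
        (continuous_const.mul (continuous_rpow_const hα.le))).continuousOn
  have hshift := ((hasSum_nat_add_iff' 1).2 (hasSum_mittagLeffler hα (M * s ^ α))).mul_left
    (Gamma α)
  simp only [Finset.range_one, Finset.sum_singleton, pow_zero, CharP.cast_eq_zero, mul_zero,
    zero_add, Gamma_one, div_one] at hshift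
  exact (hsum_int.mul_left M).unique
    (by simpa only [F, mul_integral_sub_rpow_mul_pow_div_Gamma hα hs] using hshift)

lemma lt_on_Icc_of_first_crossing {u w : ℝ → ℝ} {a b : ℝ} (hu : ContinuousOn u (Icc a b))
    (hw : ContinuousOn w (Icc a b)) (ha : u a < w a)
    (hstep : ∀ c ∈ Ioc a b, (∀ τ ∈ Ico a c, u τ < w τ) → u c < w c) :
    ∀ s ∈ Icc a b, u s < w s := by
  by_contra! h
  obtain ⟨s, hs, hws⟩ := h
  set S := {s ∈ Icc a b | w s ≤ u s}
  have hS_bdd : BddBelow S := ⟨a, fun x hx => hx.1.1⟩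
  have hc : sInf S ∈ S := (isClosed_Icc.isClosed_le hw hu).csInf_mem ⟨s, hs, hws⟩ hS_bdd
  have hac : a < sInf S := hc.1.1.lt_of_ne fun hca => (hca ▸ ha).not_ge hc.2
  refine (hstep _ ⟨hac, hc.1.2⟩ fun τ hτ => ?_).not_ge hc.2
  by_contra! hτS
  exact hτ.2.not_ge (csInf_le hS_bdd ⟨⟨hτ.1, hτ.2.le.trans hc.1.2⟩, hτS⟩)

theorem le_mul_mittagLeffler_of_le_volterra {α t M : ℝ} {u : ℝ → ℝ} (hα : 0 < α) (ht : 0 ≤ t)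
    (hM : 0 ≤ M) (hu : ContinuousOn u (Icc 0 t))
    (hle : ∀ s ∈ Icc 0 t,
      u s ≤ u 0 + M / Gamma α * ∫ τ in (0 : ℝ)..s, (s - τ) ^ (α - 1) * u τ) :
    u t ≤ u 0 * mittagLeffler α (M * t ^ α) := by
  set E : ℝ → ℝ := fun s => mittagLeffler α (M * s ^ α)
  have hE : Continuous E :=
    (continuous_mittagLeffler hα).comp (continuous_const.mul (continuous_rpow_const hα.le))
  have hlt : ∀ δ > 0, u t < (u 0 + δ) * E t := by
    intro δ hδ
    refine lt_on_Icc_of_first_crossing (w := fun s => (u 0 + δ) * E s) hu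
      (continuousOn_const.mul hE.continuousOn) ?_ ?_ t ⟨ht, le_rfl⟩
    · simp [E, zero_rpow hα.ne', mittagLeffler_zero, hδ]
    -- Up to a first crossing time `c`, `(u 0 + δ) * E` is an exact solution lying above `u`,
    -- so the integral inequality leaves a margin `δ` at `c`.
    intro c hc hbelow
    have hsub : uIcc 0 c ⊆ Icc 0 t := uIcc_subset_Icc ⟨le_rfl, ht⟩ ⟨hc.1.le, hc.2⟩
    have hmono : ∫ τ in (0 : ℝ)..c, (c - τ) ^ (α - 1) * u τ
        ≤ ∫ τ in (0 : ℝ)..c, (c - τ) ^ (α - 1) * ((u 0 + δ) * E τ) :=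
      integral_mono_on_of_le_Ioo hc.1.le
        ((intervalIntegrable_sub_rpow_sub_one hα c).mul_continuousOn (hu.mono hsub))
        ((intervalIntegrable_sub_rpow_sub_one hα c).mul_continuousOn
          (continuousOn_const.mul hE.continuousOn))
        fun τ hτ => mul_le_mul_of_nonneg_left (hbelow τ ⟨hτ.1.le, hτ.2⟩).le
          (rpow_nonneg (by linarith [hτ.2]) _)
    have hE_volterra : M * ∫ τ in (0 : ℝ)..c, (c - τ) ^ (α - 1) * E τ = Gamma α * (E c - 1) :=
      mittagLeffler_volterra hα hM hc.1.le
    calc u c ≤ u 0 + M / Gamma α * ∫ τ in (0 : ℝ)..c, (c - τ) ^ (α - 1) * u τ :=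
          hle c ⟨hc.1.le, hc.2⟩
      _ ≤ u 0 + M / Gamma α * ∫ τ in (0 : ℝ)..c, (c - τ) ^ (α - 1) * ((u 0 + δ) * E τ) := by
          gcongr
      _ = u 0 + (u 0 + δ) * (E c - 1) := by
          simp_rw [mul_left_comm _ (u 0 + δ), intervalIntegral.integral_const_mul]
          rw [div_mul_eq_mul_div, mul_left_comm M, hE_volterra]
          field_simp
      _ < (u 0 + δ) * E c := by linarith
  have hlim : Tendsto (fun δ => (u 0 + δ) * E t) (𝓝[>] 0) (𝓝 ((u 0 + 0) * E t)) :=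
    ((continuous_const.add continuous_id).mul continuous_const).continuousAt.tendsto.mono_left
      nhdsWithin_le_nhds
  rw [add_zero] at hlim
  exact ge_of_tendsto hlim (eventually_nhdsWithin_of_forall fun δ hδ => (hlt δ hδ).le)

section VolterraDifference

variable {E : Type*} [NormedAddCommGroup E] [NormedSpace ℝ E]

lemma norm_integral_sub_rpow_smul_le {α s : ℝ} (hα : 0 < α) (hs : 0 ≤ s) {F : ℝ → E}
    {v : ℝ → ℝ} (hF : ContinuousOn F (Icc 0 s)) (hv : ContinuousOn v (Icc 0 s))
    (hFv : ∀ τ ∈ Icc 0 s, ‖F τ‖ ≤ v τ) :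
    ‖∫ τ in (0 : ℝ)..s, (s - τ) ^ (α - 1) • F τ‖
      ≤ ∫ τ in (0 : ℝ)..s, (s - τ) ^ (α - 1) * v τ := by
  rw [← uIcc_of_le hs] at hF hv
  refine (intervalIntegral.norm_integral_le_integral_norm hs).trans <| integral_mono_on hs
    ((intervalIntegrable_sub_rpow_sub_one hα s).smul_continuousOn hF).norm
    ((intervalIntegrable_sub_rpow_sub_one hα s).mul_continuousOn hv) fun τ hτ => ?_
  have hkernel : 0 ≤ (s - τ) ^ (α - 1) := rpow_nonneg (sub_nonneg.2 hτ.2) _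
  rw [norm_smul, norm_of_nonneg hkernel]
  exact mul_le_mul_of_nonneg_left (hFv τ hτ) hkernel

lemma norm_sub_le_volterra {α t M : ℝ} (hα : 0 < α) {x₁ x₂ F₁ F₂ : ℝ → E}
    (hx₁ : ContinuousOn x₁ (Icc 0 t)) (hx₂ : ContinuousOn x₂ (Icc 0 t))
    (hF₁ : ContinuousOn F₁ (Icc 0 t)) (hF₂ : ContinuousOn F₂ (Icc 0 t))
    (hF : ∀ τ ∈ Icc 0 t, ‖F₂ τ - F₁ τ‖ ≤ M * ‖x₂ τ - x₁ τ‖)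
    (hvolt₁ : ∀ s ∈ Icc 0 t,
      x₁ s = x₁ 0 + (1 / Gamma α) • ∫ τ in (0 : ℝ)..s, (s - τ) ^ (α - 1) • F₁ τ)
    (hvolt₂ : ∀ s ∈ Icc 0 t,
      x₂ s = x₂ 0 + (1 / Gamma α) • ∫ τ in (0 : ℝ)..s, (s - τ) ^ (α - 1) • F₂ τ) :
    ∀ s ∈ Icc 0 t, ‖x₂ s - x₁ s‖
      ≤ ‖x₂ 0 - x₁ 0‖ + M / Gamma α * ∫ τ in (0 : ℝ)..s, (s - τ) ^ (α - 1) * ‖x₂ τ - x₁ τ‖ := by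
  intro s hs
  have hsub : Icc 0 s ⊆ Icc 0 t := Icc_subset_Icc_right hs.2
  have hΓ : 0 < Gamma α := Gamma_pos_of_pos hα
  have hint : ∀ {F : ℝ → E}, ContinuousOn F (Icc 0 t) →
      IntervalIntegrable (fun τ => (s - τ) ^ (α - 1) • F τ) volume 0 s := fun hF =>
    (intervalIntegrable_sub_rpow_sub_one hα s).smul_continuousOn
      (hF.mono ((uIcc_of_le hs.1).trans_subset hsub))
  have hdiff : x₂ s - x₁ s = (x₂ 0 - x₁ 0) + (1 / Gamma α) •
      ∫ τ in (0 : ℝ)..s, (s - τ) ^ (α - 1) • (F₂ τ - F₁ τ) := by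
    have hsplit : ∫ τ in (0 : ℝ)..s, (s - τ) ^ (α - 1) • (F₂ τ - F₁ τ)
        = (∫ τ in (0 : ℝ)..s, (s - τ) ^ (α - 1) • F₂ τ)
          - ∫ τ in (0 : ℝ)..s, (s - τ) ^ (α - 1) • F₁ τ := by
      simp only [smul_sub]
      exact integral_sub (hint hF₂) (hint hF₁)
    rw [hsplit, hvolt₁ s hs, hvolt₂ s hs, smul_sub]
    abel
  have hbound := norm_integral_sub_rpow_smul_le (F := fun τ => F₂ τ - F₁ τ)
    (v := fun τ => M * ‖x₂ τ - x₁ τ‖) hα hs.1 ((hF₂.sub hF₁).mono hsub)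
    (continuousOn_const.mul ((hx₂.sub hx₁).norm.mono hsub)) fun τ hτ => hF τ (hsub hτ)
  simp_rw [mul_left_comm _ M, intervalIntegral.integral_const_mul] at hbound
  calc ‖x₂ s - x₁ s‖ ≤ ‖x₂ 0 - x₁ 0‖
        + 1 / Gamma α * ‖∫ τ in (0 : ℝ)..s, (s - τ) ^ (α - 1) • (F₂ τ - F₁ τ)‖ := by
        rw [hdiff]
        refine (norm_add_le _ _).trans_eq ?_
        rw [norm_smul, norm_of_nonneg (one_div_pos.2 hΓ).le]
    _ ≤ _ := by
        rw [div_eq_mul_one_div M, mul_comm M, mul_assoc]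
        gcongr

end VolterraDifference

theorem divergence_rate_ddim_general
    (α T : ℝ) (hα : α ∈ Set.Ioo (0 : ℝ) 1)
    (d : ℕ)
    (f : ℝ → EuclideanSpace ℝ (Fin d) → EuclideanSpace ℝ (Fin d))
    (hf : ContinuousOn (fun p : ℝ × EuclideanSpace ℝ (Fin d) => f p.1 p.2)
      (Set.Icc 0 T ×ˢ (Set.univ : Set (EuclideanSpace ℝ (Fin d)))))
    (L : ℝ → ℝ) (hL : ContinuousOn L (Set.Icc 0 T))
    (hLnonneg : ∀ t ∈ Set.Icc (0 : ℝ) T, 0 ≤ L t)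
    (hLip : ∀ t ∈ Set.Icc (0 : ℝ) T, ∀ x y : EuclideanSpace ℝ (Fin d),
      ‖f t x - f t y‖ ≤ L t * ‖x - y‖)
    (x₁ x₂ : ℝ → EuclideanSpace ℝ (Fin d))
    (hx₁ : ContinuousOn x₁ (Set.Icc 0 T)) (hx₂ : ContinuousOn x₂ (Set.Icc 0 T))
    (hvolt₁ : ∀ t ∈ Set.Icc (0 : ℝ) T,
      x₁ t = x₁ 0 + (1 / Real.Gamma α) •
        ∫ τ in (0 : ℝ)..t, (t - τ) ^ (α - 1) • f τ (x₁ τ))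
    (hvolt₂ : ∀ t ∈ Set.Icc (0 : ℝ) T,
      x₂ t = x₂ 0 + (1 / Real.Gamma α) •
        ∫ τ in (0 : ℝ)..t, (t - τ) ^ (α - 1) • f τ (x₂ τ)) :
    ∀ t ∈ Set.Icc (0 : ℝ) T,
      ‖x₂ t - x₁ t‖ ≤ ‖x₂ 0 - x₁ 0‖ * mittagLeffler α (sSup (L '' Set.Icc 0 t) * t ^ α) := by
  intro t ht
  have hsub : Icc 0 t ⊆ Icc 0 T := Icc_subset_Icc_right ht.2
  set M := sSup (L '' Icc 0 t)
  have hLM : ∀ τ ∈ Icc 0 t, L τ ≤ M := fun τ hτ =>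
    le_csSup (isCompact_Icc.image_of_continuousOn (hL.mono hsub)).bddAbove ⟨τ, hτ, rfl⟩
  have hM : 0 ≤ M := (hLnonneg 0 (hsub ⟨le_rfl, ht.1⟩)).trans (hLM 0 ⟨le_rfl, ht.1⟩)
  have hf_along : ∀ x, ContinuousOn x (Icc 0 T) → ContinuousOn (fun τ => f τ (x τ)) (Icc 0 t) :=
    fun x hx => (hf.comp (continuousOn_id.prodMk hx) fun τ hτ => ⟨hτ, mem_univ _⟩).mono hsub
  refine le_mul_mittagLeffler_of_le_volterra (u := fun s => ‖x₂ s - x₁ s‖) hα.1 ht.1 hM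
    ((hx₂.sub hx₁).norm.mono hsub) ?_
  exact norm_sub_le_volterra hα.1 (hx₁.mono hsub) (hx₂.mono hsub) (hf_along x₁ hx₁)
    (hf_along x₂ hx₂)
    (fun τ hτ => (hLip τ (hsub hτ) _ _).trans
      (mul_le_mul_of_nonneg_right (hLM τ hτ) (norm_nonneg _)))
    (fun s hs => hvolt₁ s (hsub hs)) fun s hs => hvolt₂ s (hsub hs)

/-- Divergence rate for solutions of `d`-dimensional Caputo FDEs (in Volterra integral form),
with the Euclidean norm:
`‖x₂(t) - x₁(t)‖ ≤ ‖x₂(0) - x₁(0)‖ E_α((max_{0 ≤ τ ≤ t} L(τ)) t^α)`. -/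
theorem divergence_rate_ddim
    (α T : ℝ) (hα : α ∈ Set.Ioo (0 : ℝ) 1) (hT : 0 < T)
    (d : ℕ) (hd : 1 ≤ d)
    (f : ℝ → EuclideanSpace ℝ (Fin d) → EuclideanSpace ℝ (Fin d))
    (hf : ContinuousOn (fun p : ℝ × EuclideanSpace ℝ (Fin d) => f p.1 p.2)
      (Set.Icc 0 T ×ˢ (Set.univ : Set (EuclideanSpace ℝ (Fin d)))))
    (L : ℝ → ℝ) (hL : ContinuousOn L (Set.Icc 0 T))
    (hLnonneg : ∀ t ∈ Set.Icc (0 : ℝ) T, 0 ≤ L t)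
    (hLip : ∀ t ∈ Set.Icc (0 : ℝ) T, ∀ x y : EuclideanSpace ℝ (Fin d),
      ‖f t x - f t y‖ ≤ L t * ‖x - y‖)
    (x₁ x₂ : ℝ → EuclideanSpace ℝ (Fin d))
    (hx₁ : ContinuousOn x₁ (Set.Icc 0 T)) (hx₂ : ContinuousOn x₂ (Set.Icc 0 T))
    (hvolt₁ : ∀ t ∈ Set.Icc (0 : ℝ) T,
      x₁ t = x₁ 0 + (1 / Real.Gamma α) •
        ∫ τ in (0 : ℝ)..t, (t - τ) ^ (α - 1) • f τ (x₁ τ))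
    (hvolt₂ : ∀ t ∈ Set.Icc (0 : ℝ) T,
      x₂ t = x₂ 0 + (1 / Real.Gamma α) •
        ∫ τ in (0 : ℝ)..t, (t - τ) ^ (α - 1) • f τ (x₂ τ)) :
    ∀ t ∈ Set.Icc (0 : ℝ) T,
      ‖x₂ t - x₁ t‖ ≤ ‖x₂ 0 - x₁ 0‖ * mittagLeffler α (sSup (L '' Set.Icc 0 t) * t ^ α) :=
  divergence_rate_ddim_general α T hα d f hf L hL hLnonneg hLip x₁ x₂ hx₁ hx₂ hvolt₁ hvolt₂
end
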